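/- arXiv:2105.00625 — 4 statements merged into one kernel-verified Lean document; each statement's English description precedes it below -/
import Mathlib

section
/- m_ℓ ≠ 0 for every ℓ ∈ {0,…,k−1} if and only if α ≥ β. (This is the correctness of the judge's decision rule in the semi-honest three-party comparison protocol.) -/
/-!
Both `s_ℓ` and `w_ℓ` lie in `[0, b^d)`, so `m_ℓ = 0` exactly when `s_ℓ = w_ℓ` and the
digits of `α` and `β` above position `ℓ` agree. Since `s_ℓ < b^d`, `s_ℓ = w_ℓ` means
`b^d ∣ b^(d-α_ℓ-1+β_ℓ)`, i.e. `α_ℓ < β_ℓ`. Hence some `m_ℓ` vanishes iff, at the highest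
position where the digits of `α` and `β` differ, `α` has the smaller digit, which is the
lexicographic description of `α < β`.
-/

open Finset

theorem Nat.exists_div_pow_lt_and_div_pow_succ_eq {d A B : ℕ} (k : ℕ) (hAB : A < B)
    (hk : B / d ^ k ≤ A / d ^ k) :
    ∃ ℓ < k, A / d ^ ℓ < B / d ^ ℓ ∧ A / d ^ (ℓ + 1) = B / d ^ (ℓ + 1) := by
  induction k with
  | zero => simp only [pow_zero, Nat.div_one] at hk; omega
  | succ k ih =>
    by_cases hk' : B / d ^ k ≤ A / d ^ k
    · obtain ⟨ℓ, hℓ, h⟩ := ih hk'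
      exact ⟨ℓ, hℓ.trans (lt_add_one k), h⟩
    · exact ⟨k, lt_add_one k, by omega,
        (Nat.div_le_div_right hAB.le).antisymm hk⟩

theorem Nat.lt_iff_exists_div_pow_lt_and_div_pow_succ_eq {d A B k : ℕ} (hB : B < d ^ k) :
    A < B ↔ ∃ ℓ < k, A / d ^ ℓ < B / d ^ ℓ ∧ A / d ^ (ℓ + 1) = B / d ^ (ℓ + 1) := by
  refine ⟨fun hAB ↦ Nat.exists_div_pow_lt_and_div_pow_succ_eq k hAB ?_, ?_⟩
  · rw [Nat.div_eq_of_lt hB]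
    exact Nat.zero_le _
  · rintro ⟨ℓ, -, hlt, -⟩
    by_contra! hBA
    exact (Nat.div_le_div_right hBA).not_gt hlt

theorem Nat.add_mul_eq_add_mul_iff {n x y a c : ℕ} (hx : x < n) (hy : y < n) :
    x + n * a = y + n * c ↔ x = y ∧ a = c := by
  refine ⟨fun h ↦ ?_, fun ⟨hxy, hac⟩ ↦ hxy ▸ hac ▸ rfl⟩
  have hmod := congrArg (· % n) h
  have hdiv := congrArg (· / n) h
  simp only [Nat.add_mul_mod_self_left, Nat.mod_eq_of_lt hx, Nat.mod_eq_of_lt hy] at hmod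
  simp only [Nat.add_mul_div_left _ _ ((Nat.zero_le x).trans_lt hx), Nat.div_eq_of_lt hx,
    Nat.div_eq_of_lt hy, zero_add] at hdiv
  exact ⟨hmod, hdiv⟩

theorem Nat.pow_add_mod_pow_eq_self_iff {b d e s : ℕ} (hb : 1 < b) (hs : s < b ^ d) :
    (b ^ e + s) % b ^ d = s ↔ d ≤ e := by
  rw [add_comm]
  nth_rw 2 [← Nat.mod_eq_of_lt hs]
  exact Nat.add_modEq_left_iff.trans (Nat.pow_dvd_pow_iff_le_right hb)

section Digits

variable {d k : ℕ}

theorem sum_range_mul_pow_lt (a : ℕ → ℕ) (j : ℕ) (ha : ∀ i < j, a i < d) :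
    ∑ i ∈ range j, a i * d ^ i < d ^ j := by
  induction j with
  | zero => simp
  | succ j ih =>
    have hlow := ih fun i hi ↦ ha i (hi.trans (lt_add_one j))
    have htop : (a j + 1) * d ^ j ≤ d * d ^ j := Nat.mul_le_mul_right _ (ha j (lt_add_one j))
    rw [sum_range_succ, pow_succ']
    linarith

theorem sum_range_eq_add_pow_mul_sum_Ico (a : ℕ → ℕ) {j : ℕ} (hjk : j ≤ k) :
    ∑ i ∈ range k, a i * d ^ i
      = ∑ i ∈ range j, a i * d ^ i + d ^ j * ∑ u ∈ Ico j k, a u * d ^ (u - j) := by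
  rw [← sum_range_add_sum_Ico _ hjk, mul_sum]
  congr 1
  refine sum_congr rfl fun u hu ↦ ?_
  rw [mul_left_comm, pow_mul_pow_sub d (mem_Ico.mp hu).1]

theorem sum_Ico_mul_pow_sub_eq_div (a : ℕ → ℕ) {j : ℕ} (hjk : j ≤ k)
    (ha : ∀ i < j, a i < d) :
    ∑ u ∈ Ico j k, a u * d ^ (u - j) = (∑ i ∈ range k, a i * d ^ i) / d ^ j := by
  have hlow := sum_range_mul_pow_lt a j ha
  rw [sum_range_eq_add_pow_mul_sum_Ico a hjk,
    Nat.add_mul_div_left _ _ ((Nat.zero_le _).trans_lt hlow), Nat.div_eq_of_lt hlow, zero_add]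

theorem sum_Ico_mul_pow_sub_eq_add_mul (a : ℕ → ℕ) {ℓ : ℕ} (hℓ : ℓ < k) :
    ∑ u ∈ Ico ℓ k, a u * d ^ (u - ℓ)
      = a ℓ + d * ∑ u ∈ Ico (ℓ + 1) k, a u * d ^ (u - (ℓ + 1)) := by
  rw [sum_eq_sum_Ico_succ_bot hℓ, Nat.sub_self, pow_zero, mul_one, mul_sum]
  congr 1
  refine sum_congr rfl fun u hu ↦ ?_
  rw [mul_left_comm, ← pow_succ', Nat.sub_add_eq, Nat.sub_add_cancel]
  have := (mem_Ico.mp hu).1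
  omega

theorem sum_range_mul_pow_lt_iff {a c : ℕ → ℕ} (ha : ∀ i < k, a i < d)
    (hc : ∀ i < k, c i < d) :
    ∑ i ∈ range k, a i * d ^ i < ∑ i ∈ range k, c i * d ^ i ↔
      ∃ ℓ < k, a ℓ < c ℓ ∧ ∑ u ∈ Ico (ℓ + 1) k, a u * d ^ (u - (ℓ + 1))
        = ∑ u ∈ Ico (ℓ + 1) k, c u * d ^ (u - (ℓ + 1)) := by
  have hdiv (x : ℕ → ℕ) (hx : ∀ i < k, x i < d) {j : ℕ} (hj : j ≤ k) :=
    (sum_Ico_mul_pow_sub_eq_div x hj fun i hi ↦ hx i (hi.trans_le hj)).symm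
  rw [Nat.lt_iff_exists_div_pow_lt_and_div_pow_succ_eq (sum_range_mul_pow_lt c k hc)]
  refine exists_congr fun ℓ ↦ and_congr_right fun hℓ ↦ ?_
  rw [hdiv a ha hℓ.le, hdiv c hc hℓ.le, hdiv a ha (j := ℓ + 1) hℓ,
    hdiv c hc (j := ℓ + 1) hℓ, sum_Ico_mul_pow_sub_eq_add_mul a hℓ,
    sum_Ico_mul_pow_sub_eq_add_mul c hℓ]
  exact and_congr_left fun htail ↦ by rw [htail]; omega

end Digits

theorem judge_decision_rule_correct_general
    (b d k : ℕ) (hb : 2 ≤ b)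
    (α β : ℕ → ℕ) (hα : ∀ i < k, α i < d) (hβ : ∀ i < k, β i < d)
    (s : ℕ → ℕ) (hs : ∀ ℓ < k, 1 ≤ s ℓ ∧ s ℓ < b ^ d ∧ ¬ b ∣ s ℓ)
    (w : ℕ → ℕ) (hw : ∀ ℓ, w ℓ = (b ^ (d - α ℓ - 1 + β ℓ) + s ℓ) % b ^ d)
    (r r' : ℕ → ℤ) (hr : ∀ ℓ, r ℓ ≠ 0) (hr' : ∀ ℓ, r' ℓ ≠ 0)
    (m : ℕ → ℤ)
    (hm : ∀ ℓ, m ℓ = r ℓ * r' ℓ *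
      (((s ℓ + b ^ d * ∑ u ∈ Finset.Ico (ℓ + 1) k, β u * d ^ (u - (ℓ + 1)) : ℕ) : ℤ) -
       ((w ℓ + b ^ d * ∑ u ∈ Finset.Ico (ℓ + 1) k, α u * d ^ (u - (ℓ + 1)) : ℕ) : ℤ))) :
    (∀ ℓ < k, m ℓ ≠ 0) ↔
      (∑ i ∈ Finset.range k, β i * d ^ i) ≤ (∑ i ∈ Finset.range k, α i * d ^ i) := by
  have hm_eq_zero : ∀ ℓ < k, m ℓ = 0 ↔ α ℓ < β ℓ ∧ ∑ u ∈ Ico (ℓ + 1) k, α u * d ^ (u - (ℓ + 1))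
      = ∑ u ∈ Ico (ℓ + 1) k, β u * d ^ (u - (ℓ + 1)) := by
    intro ℓ hℓ
    have hs_lt := (hs ℓ hℓ).2.1
    have hw_lt : w ℓ < b ^ d := hw ℓ ▸ Nat.mod_lt _ (by positivity)
    have hs_eq_w : s ℓ = w ℓ ↔ α ℓ < β ℓ := by
      rw [eq_comm, hw ℓ, Nat.pow_add_mod_pow_eq_self_iff hb hs_lt]
      have := hα ℓ hℓ
      omega
    rw [hm ℓ, mul_eq_zero, mul_eq_zero, sub_eq_zero, Nat.cast_inj,
      Nat.add_mul_eq_add_mul_iff hs_lt hw_lt]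
    simp only [hr ℓ, hr' ℓ, or_self, false_or]
    exact and_congr hs_eq_w eq_comm
  rw [← not_lt, sum_range_mul_pow_lt_iff hα hβ]
  simp only [not_exists, not_and]
  exact forall₂_congr fun ℓ hℓ ↦ by rw [ne_eq, hm_eq_zero ℓ hℓ, not_and]

/-- `m_ℓ ≠ 0` for every `ℓ ∈ {0,…,k−1}` iff `α ≥ β`, where
`m_ℓ = r_ℓ · r_ℓ' · (concat_ℓ(β, s_ℓ) − concat_ℓ(α, w_ℓ))`. -/
theorem judge_decision_rule_correct
    (b d k : ℕ) (hb : 2 ≤ b) (hd : 2 ≤ d) (hk : 1 ≤ k)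
    (α β : ℕ → ℕ) (hα : ∀ i < k, α i < d) (hβ : ∀ i < k, β i < d)
    (s : ℕ → ℕ) (hs : ∀ ℓ < k, 1 ≤ s ℓ ∧ s ℓ < b ^ d ∧ ¬ b ∣ s ℓ)
    (w : ℕ → ℕ) (hw : ∀ ℓ, w ℓ = (b ^ (d - α ℓ - 1 + β ℓ) + s ℓ) % b ^ d)
    (r r' : ℕ → ℤ) (hr : ∀ ℓ, r ℓ ≠ 0) (hr' : ∀ ℓ, r' ℓ ≠ 0)
    (m : ℕ → ℤ)
    (hm : ∀ ℓ, m ℓ = r ℓ * r' ℓ *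
      (((s ℓ + b ^ d * ∑ u ∈ Finset.Ico (ℓ + 1) k, β u * d ^ (u - (ℓ + 1)) : ℕ) : ℤ) -
       ((w ℓ + b ^ d * ∑ u ∈ Finset.Ico (ℓ + 1) k, α u * d ^ (u - (ℓ + 1)) : ℕ) : ℤ))) :
    (∀ ℓ < k, m ℓ ≠ 0) ↔
      (∑ i ∈ Finset.range k, β i * d ^ i) ≤ (∑ i ∈ Finset.range k, α i * d ^ i) :=
  judge_decision_rule_correct_general b d k hb α β hα hβ s hs w hw r r' hr hr' m hm
end

section
/- The exclusive-or F = T_1 ⊕ T_2 ⊕ ⋯ ⊕ T_η equals 1 if and only if α > β; equivalently, the number of indices ℓ with T_ℓ true is odd if and only if α > β. -/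
/-!
`T_ℓ` says that `ℓ` is the most significant position where `α` and `β` differ and that
`α_ℓ = 1` there. The bits below position `η` weigh less than `2 ^ (η - 1)`, so `α > β` iff
either `α_η = 1, β_η = 0`, or `α_η = β_η` and the lower `η - 1` bits compare the same way; by
induction on `η` this is the existence of an `ℓ` with `T_ℓ`. Two such positions `ℓ < ℓ'` cannot
coexist, since `T_ℓ` forces `α_ℓ' = β_ℓ'`, so at most one `T_ℓ` holds and the parity of their
number records whether one exists.
-/

open Finset

namespace FischlinComparison

def binVal (a : ℕ → Bool) (η : ℕ) : ℕ :=
  ∑ ℓ ∈ Icc 1 η, (if a ℓ = true then 1 else 0) * 2 ^ (ℓ - 1)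

/-- Fischlin's term `T_ℓ`. -/
def term (a b : ℕ → Bool) (η ℓ : ℕ) : Prop :=
  a ℓ = true ∧ b ℓ = false ∧ ∀ u ∈ Ioc ℓ η, a u = b u

variable (a b : ℕ → Bool)

instance (η : ℕ) : DecidablePred (term a b η) :=
  fun _ => inferInstanceAs (Decidable (_ ∧ _ ∧ _))

lemma binVal_succ (n : ℕ) :
    binVal a (n + 1) = binVal a n + (if a (n + 1) = true then 1 else 0) * 2 ^ n := by
  rw [binVal, sum_Icc_succ_top (by omega), Nat.add_sub_cancel, binVal]

lemma binVal_lt_two_pow : ∀ n, binVal a n < 2 ^ n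
  | 0 => by simp [binVal]
  | n + 1 => by
    have := binVal_lt_two_pow n
    rw [binVal_succ, pow_succ]
    split <;> omega

lemma binVal_lt_binVal_succ_iff (n : ℕ) :
    binVal b (n + 1) < binVal a (n + 1) ↔
      (a (n + 1) = true ∧ b (n + 1) = false) ∨
        (a (n + 1) = b (n + 1) ∧ binVal b n < binVal a n) := by
  have ha := binVal_lt_two_pow a n
  have hb := binVal_lt_two_pow b n
  rw [binVal_succ, binVal_succ]
  cases a (n + 1) <;> cases b (n + 1) <;> simp <;> omega

lemma term_self (n : ℕ) : term a b n n ↔ a n = true ∧ b n = false := by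
  simp [term]

lemma term_succ_of_le {ℓ n : ℕ} (hℓ : ℓ ≤ n) :
    term a b (n + 1) ℓ ↔ a (n + 1) = b (n + 1) ∧ term a b n ℓ := by
  simp only [term, ← insert_Ioc_right_eq_Ioc_add_one hℓ, forall_mem_insert]
  tauto

lemma exists_term_succ_iff (n : ℕ) :
    (∃ ℓ ∈ Icc 1 (n + 1), term a b (n + 1) ℓ) ↔
      (a (n + 1) = true ∧ b (n + 1) = false) ∨
        (a (n + 1) = b (n + 1) ∧ ∃ ℓ ∈ Icc 1 n, term a b n ℓ) := by
  rw [← insert_Icc_right_eq_Icc_add_one (by omega), exists_mem_insert, term_self]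
  refine or_congr_right ⟨fun ⟨ℓ, hℓ, hT⟩ => ?_, fun ⟨heq, ℓ, hℓ, hT⟩ => ?_⟩
  · have hT' := (term_succ_of_le a b (mem_Icc.mp hℓ).2).mp hT
    exact ⟨hT'.1, ℓ, hℓ, hT'.2⟩
  · exact ⟨ℓ, hℓ, (term_succ_of_le a b (mem_Icc.mp hℓ).2).mpr ⟨heq, hT⟩⟩

theorem binVal_lt_binVal_iff_exists_term :
    ∀ η, binVal b η < binVal a η ↔ ∃ ℓ ∈ Icc 1 η, term a b η ℓ
  | 0 => by simp [binVal]
  | n + 1 => by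
    rw [binVal_lt_binVal_succ_iff, exists_term_succ_iff, binVal_lt_binVal_iff_exists_term n]

lemma not_term_of_lt {η ℓ ℓ' : ℕ} (hT : term a b η ℓ) (hlt : ℓ < ℓ') (hℓ' : ℓ' ≤ η) :
    ¬ term a b η ℓ' := by
  rintro ⟨ha, hb, -⟩
  simpa [ha, hb] using hT.2.2 ℓ' (mem_Ioc.mpr ⟨hlt, hℓ'⟩)

variable {a b} in
lemma term_eq_of_term {η ℓ ℓ' : ℕ} (hℓ : ℓ ≤ η) (hℓ' : ℓ' ≤ η)
    (hT : term a b η ℓ) (hT' : term a b η ℓ') : ℓ = ℓ' := by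
  rcases lt_trichotomy ℓ ℓ' with hlt | heq | hgt
  · exact absurd hT' (not_term_of_lt a b hT hlt hℓ')
  · exact heq
  · exact absurd hT (not_term_of_lt a b hT' hgt hℓ)

lemma card_filter_term_le_one (η : ℕ) :
    #((Icc 1 η).filter (term a b η)) ≤ 1 :=
  card_le_one.mpr fun _ hℓ _ hℓ' =>
    term_eq_of_term (mem_Icc.mp (mem_filter.mp hℓ).1).2 (mem_Icc.mp (mem_filter.mp hℓ').1).2
      (mem_filter.mp hℓ).2 (mem_filter.mp hℓ').2

lemma card_filter_term_eq_one_iff (η : ℕ) :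
    #((Icc 1 η).filter (term a b η)) = 1 ↔ binVal b η < binVal a η := by
  have hle := card_filter_term_le_one a b η
  rw [binVal_lt_binVal_iff_exists_term, ← card_pos.trans filter_nonempty_iff]
  omega

end FischlinComparison

open FischlinComparison in
theorem fischlin_circuit_correct_general
    (η : ℕ) (a b : ℕ → Bool)
    (A B : ℕ)
    (hA : A = ∑ ℓ ∈ Finset.Icc 1 η, (if a ℓ = true then 1 else 0) * 2 ^ (ℓ - 1))
    (hB : B = ∑ ℓ ∈ Finset.Icc 1 η, (if b ℓ = true then 1 else 0) * 2 ^ (ℓ - 1)) :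
    ((∑ ℓ ∈ Finset.Icc 1 η,
        (if a ℓ = true ∧ b ℓ = false ∧ ∀ u ∈ Finset.Ioc ℓ η, a u = b u
          then (1 : ZMod 2) else 0)) = 1 ↔ A > B) ∧
    (Odd ((Finset.Icc 1 η).filter
        (fun ℓ => a ℓ = true ∧ b ℓ = false ∧ ∀ u ∈ Finset.Ioc ℓ η, a u = b u)).card
      ↔ A > B) := by
  subst hA hB
  rw [sum_boole]
  show ((#((Icc 1 η).filter (term a b η)) : ZMod 2) = 1 ↔ binVal b η < binVal a η) ∧
    (Odd #((Icc 1 η).filter (term a b η)) ↔ binVal b η < binVal a η)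
  rw [← card_filter_term_eq_one_iff]
  rcases Nat.le_one_iff_eq_zero_or_eq_one.mp (card_filter_term_le_one a b η) with h | h <;>
    simp [h]

/-- the exclusive-or `F = T_1 ⊕ ⋯ ⊕ T_η` (computed as a sum in
`ZMod 2`) equals `1` iff `α > β`; equivalently the number of indices `ℓ` with
`T_ℓ` true is odd iff `α > β`. -/
theorem fischlin_circuit_correct
    (η : ℕ) (hη : 1 ≤ η) (a b : ℕ → Bool)
    (A B : ℕ)
    (hA : A = ∑ ℓ ∈ Finset.Icc 1 η, (if a ℓ = true then 1 else 0) * 2 ^ (ℓ - 1))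
    (hB : B = ∑ ℓ ∈ Finset.Icc 1 η, (if b ℓ = true then 1 else 0) * 2 ^ (ℓ - 1)) :
    ((∑ ℓ ∈ Finset.Icc 1 η,
        (if a ℓ = true ∧ b ℓ = false ∧ ∀ u ∈ Finset.Ioc ℓ η, a u = b u
          then (1 : ZMod 2) else 0)) = 1 ↔ A > B) ∧
    (Odd ((Finset.Icc 1 η).filter
        (fun ℓ => a ℓ = true ∧ b ℓ = false ∧ ∀ u ∈ Finset.Ioc ℓ η, a u = b u)).card
      ↔ A > B) :=
  fischlin_circuit_correct_general η a b A B hA hB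
end

section
/- For every integer r coprime to n and every bit b ∈ {0,1}, one has (r²·(−1)^b)^{(p−1)(q−1)/4} ≡ (−1)^b (mod n). Consequently Goldwasser–Micali decryption with the private key sk = (p−1)(q−1)/4 correctly recovers the encrypted bit. -/
/-!
Write `p - 1 = 2k` and `q - 1 = 2l`; since `p ≡ q ≡ 3 (mod 4)`, both `k` and `l` are odd and the
private key is `kl`. The Carmichael exponent `lcm (p - 1) (q - 1)` of `(ℤ/pqℤ)ˣ` divides `2kl`, so
`r ^ (2kl) = 1`, while `(-1) ^ (kl) = -1` because `kl` is odd.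
-/

open ArithmeticFunction

theorem ZMod.units_pow_eq_one_of_totient_dvd {m n e : ℕ} (hmn : m.Coprime n)
    (x : (ZMod (m * n))ˣ) (hm : m.totient ∣ e) (hn : n.totient ∣ e) : x ^ e = 1 := by
  obtain ⟨c, rfl⟩ : carmichael (m * n) ∣ e := by
    rw [carmichael_mul hmn]
    exact Nat.lcm_dvd ((carmichael_dvd_totient m).trans hm) ((carmichael_dvd_totient n).trans hn)
  rw [pow_mul, pow_carmichael, one_pow]

theorem Nat.exists_odd_sub_one_eq_two_mul_of_mod_four_eq_three {n : ℕ} (h : n % 4 = 3) :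
    ∃ k, Odd k ∧ n - 1 = 2 * k :=
  ⟨(n - 1) / 2, Nat.odd_iff.2 (by omega), by omega⟩

theorem sq_mul_neg_one_pow_pow_of_odd {M : Type*} [CommMonoid M] [HasDistribNeg M] {x : M}
    {m : ℕ} (hx : x ^ (2 * m) = 1) (hm : Odd m) (b : ℕ) :
    (x ^ 2 * (-1) ^ b) ^ m = (-1) ^ b := by
  rw [mul_pow, ← pow_mul, hx, one_mul, ← pow_mul, mul_comm, pow_mul, hm.neg_one_pow]

theorem gm_decryption_correct_general
    (p q : ℕ) (hp : p.Prime) (hq : q.Prime) (hpq : p ≠ q)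
    (hp4 : p % 4 = 3) (hq4 : q % 4 = 3)
    (r : (ZMod (p * q))ˣ) (b : ℕ) :
    ((r : ZMod (p * q)) ^ 2 * (-1) ^ b) ^ ((p - 1) * (q - 1) / 4) = (-1) ^ b := by
  obtain ⟨k, hk, hpk⟩ := Nat.exists_odd_sub_one_eq_two_mul_of_mod_four_eq_three hp4
  obtain ⟨l, hl, hql⟩ := Nat.exists_odd_sub_one_eq_two_mul_of_mod_four_eq_three hq4
  have hsk : (p - 1) * (q - 1) / 4 = k * l := by
    rw [hpk, hql, show 2 * k * (2 * l) = 4 * (k * l) by ring]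
    omega
  have hr : r ^ (2 * (k * l)) = 1 := by
    refine ZMod.units_pow_eq_one_of_totient_dvd ((Nat.coprime_primes hp hq).2 hpq) r ?_ ?_
    · exact ⟨l, by rw [Nat.totient_prime hp, hpk]; ring⟩
    · exact ⟨k, by rw [Nat.totient_prime hq, hql]; ring⟩
  rw [hsk]
  exact sq_mul_neg_one_pow_pow_of_odd (by rw [← Units.val_pow_eq_pow_val, hr, Units.val_one])
    (hk.mul hl) b

/-- for every unit `r` of `ℤ/nℤ` (with `n = p·q`, `p ≡ q ≡ 3 (mod 4)`
distinct primes) and every bit `b ∈ {0,1}`: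
`(r²·(−1)^b)^{(p−1)(q−1)/4} = (−1)^b`, so GM decryption with
`sk = (p−1)(q−1)/4` recovers the bit. -/
theorem gm_decryption_correct
    (p q : ℕ) (hp : p.Prime) (hq : q.Prime) (hpq : p ≠ q)
    (hp4 : p % 4 = 3) (hq4 : q % 4 = 3)
    (r : (ZMod (p * q))ˣ) (b : ℕ) (hb : b ≤ 1) :
    ((r : ZMod (p * q)) ^ 2 * (-1) ^ b) ^ ((p - 1) * (q - 1) / 4) = (-1) ^ b :=
  gm_decryption_correct_general p q hp hq hpq hp4 hq4 r b
end

section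
/- Let D(b) be the distribution on plaintext vectors Fin ι → Bool of an AND-encryption of the bit b: D(true) is the point mass on the all-false vector and D(false) is the uniform distribution on Fin ι → Bool. If v₁ ∼ D(b₁) and v₂ ∼ D(b₂) are sampled independently, then the probability that the all-false test of the pointwise exclusive-or, i.e. the Boolean value (∀ i, xor (v₁ i) (v₂ i) = false), equals b₁ ∧ b₂ is at least 1 − (1/2)^ι; it equals 1 when b₁ = b₂ = true. (This is the correctness of the AND-homomorphism Enc^{AND}(b₁)·Enc^{AND}(b₂) = Enc^{AND}(b₁ ∧ b₂).) -/
open scoped ENNReal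

/-!
Pointwise xor of two plaintext vectors is all-`false` exactly when the vectors coincide, so the
test succeeds with the collision probability `∑ a, p a * q a` of the two distributions. Two
encryptions of `1` always collide; as soon as one side is uniform on `Fin ι → Bool`, the
collision probability is `(1/2)^ι` whatever the other side is, so the test correctly reports `0`
with probability exactly `1 - (1/2)^ι`.
-/

namespace PMF

variable {α β : Type*}

theorem toOuterMeasure_apply_compl (p : PMF α) (s : Set α) :
    p.toOuterMeasure sᶜ = 1 - p.toOuterMeasure s := by
  refine ENNReal.eq_sub_of_add_eq (p.toOuterMeasure_apply s ▸ p.tsum_coe_indicator_ne_top s) ?_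
  rw [toOuterMeasure_apply, toOuterMeasure_apply, ← ENNReal.tsum_add,
    tsum_congr fun a => s.indicator_compl_add_self_apply p a, p.tsum_coe]

theorem bind_bind_pure_prod_apply (p : PMF α) (q : PMF β) (x : α × β) :
    (p.bind fun a => q.bind fun b => pure (a, b)) x = p x.1 * q x.2 := by
  classical
  obtain ⟨a, b⟩ := x
  simp only [bind_apply, pure_apply, Prod.ext_iff, mul_ite, mul_one, mul_zero]
  rw [tsum_eq_single a fun a' ha' => by simp [Ne.symm ha'], tsum_eq_single b fun b' hb' => by
    simp [Ne.symm hb']]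
  simp

theorem toOuterMeasure_bind_prod_diag (p q : PMF α) :
    (p.bind fun a => q.bind fun b => pure (a, b)).toOuterMeasure {x | x.1 = x.2} =
      ∑' a, p a * q a := by
  rw [toOuterMeasure_apply, ENNReal.tsum_prod']
  refine tsum_congr fun a => (tsum_eq_single a fun b hb => ?_).trans ?_
  · exact Set.indicator_of_notMem (s := {x : α × α | x.1 = x.2}) (Ne.symm hb) _
  · rw [Set.indicator_of_mem (s := {x : α × α | x.1 = x.2}) rfl, bind_bind_pure_prod_apply]

theorem toOuterMeasure_bind_prod_offDiag (p q : PMF α) :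
    (p.bind fun a => q.bind fun b => pure (a, b)).toOuterMeasure {x | x.1 ≠ x.2} =
      1 - ∑' a, p a * q a := by
  rw [← toOuterMeasure_bind_prod_diag]
  exact toOuterMeasure_apply_compl _ {x : α × α | x.1 = x.2}

theorem tsum_mul_uniformOfFintype [Fintype α] [Nonempty α] (p : PMF α) :
    ∑' a, p a * uniformOfFintype α a = (Fintype.card α : ℝ≥0∞)⁻¹ := by
  simp only [uniformOfFintype_apply, ENNReal.tsum_mul_right, p.tsum_coe, one_mul]

theorem tsum_uniformOfFintype_mul [Fintype α] [Nonempty α] (p : PMF α) :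
    ∑' a, uniformOfFintype α a * p a = (Fintype.card α : ℝ≥0∞)⁻¹ := by
  simp only [mul_comm (uniformOfFintype α _), tsum_mul_uniformOfFintype]

theorem tsum_pure_mul_pure (a : α) : ∑' x, pure a x * pure a x = 1 := by
  classical
  simp [pure_apply]

end PMF

theorem Bool.forall_xor_eq_false_iff {ι : Type*} (v w : ι → Bool) :
    (∀ i, xor (v i) (w i) = false) ↔ v = w := by
  simp [funext_iff]

theorem and_homomorphism_correct_general
    (ι : ℕ)
    (D : Bool → PMF (Fin ι → Bool))
    (hDtrue : D true = PMF.pure (fun _ => false))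
    (hDfalse : D false = PMF.uniformOfFintype (Fin ι → Bool))
    (b₁ b₂ : Bool) :
    (1 - (1 / 2 : ℝ≥0∞) ^ ι ≤
      ((D b₁).bind fun v₁ => (D b₂).bind fun v₂ => PMF.pure (v₁, v₂)).toOuterMeasure
        {v : (Fin ι → Bool) × (Fin ι → Bool) |
          decide (∀ i, xor (v.1 i) (v.2 i) = false) = (b₁ && b₂)}) ∧
    (b₁ = true → b₂ = true →
      ((D b₁).bind fun v₁ => (D b₂).bind fun v₂ => PMF.pure (v₁, v₂)).toOuterMeasure
        {v : (Fin ι → Bool) × (Fin ι → Bool) |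
          decide (∀ i, xor (v.1 i) (v.2 i) = false) = (b₁ && b₂)} = 1) := by
  have hcard : ((Fintype.card (Fin ι → Bool) : ℝ≥0∞))⁻¹ = (1 / 2) ^ ι := by
    simp [ENNReal.inv_pow]
  simp_rw [Bool.forall_xor_eq_false_iff]
  cases b₁ <;> cases b₂
  case true.true =>
    simp only [Bool.and_self, decide_eq_true_eq, hDtrue, PMF.toOuterMeasure_bind_prod_diag,
      PMF.tsum_pure_mul_pure]
    exact ⟨tsub_le_self, fun _ _ => trivial⟩
  all_goals
    simp only [Bool.and_false, Bool.and_true, decide_eq_false_iff_not, ← ne_eq,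
      PMF.toOuterMeasure_bind_prod_offDiag, hDtrue, hDfalse, PMF.tsum_mul_uniformOfFintype,
      PMF.tsum_uniformOfFintype_mul, hcard]
    exact ⟨le_rfl, by simp⟩

/-- with `D true` the point mass on the all-`false` vector and
`D false` uniform on `Fin ι → Bool`, for independent `v₁ ∼ D b₁`, `v₂ ∼ D b₂`
the probability that the all-false test of the pointwise XOR equals `b₁ ∧ b₂`
is at least `1 − (1/2)^ι`, and equals `1` when `b₁ = b₂ = true`. -/
theorem and_homomorphism_correct
    (ι : ℕ) (hι : 1 ≤ ι)
    (D : Bool → PMF (Fin ι → Bool))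
    (hDtrue : D true = PMF.pure (fun _ => false))
    (hDfalse : D false = PMF.uniformOfFintype (Fin ι → Bool))
    (b₁ b₂ : Bool) :
    (1 - (1 / 2 : ℝ≥0∞) ^ ι ≤
      ((D b₁).bind fun v₁ => (D b₂).bind fun v₂ => PMF.pure (v₁, v₂)).toOuterMeasure
        {v : (Fin ι → Bool) × (Fin ι → Bool) |
          decide (∀ i, xor (v.1 i) (v.2 i) = false) = (b₁ && b₂)}) ∧
    (b₁ = true → b₂ = true →
      ((D b₁).bind fun v₁ => (D b₂).bind fun v₂ => PMF.pure (v₁, v₂)).toOuterMeasure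
        {v : (Fin ι → Bool) × (Fin ι → Bool) |
          decide (∀ i, xor (v.1 i) (v.2 i) = false) = (b₁ && b₂)} = 1) :=
  and_homomorphism_correct_general ι D hDtrue hDfalse b₁ b₂
end
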